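/- Let [p; q] be a standard 2×n tableau and let [a; b] be a semi-standard 2×n tableau with supp([a;b]) = supp([p;q]) and [a;b] ≠ [p;q]. If k is the first index with a_k ≠ b_k (so a_k < b_k), then p_i = q_i = a_i = b_i for i < k, p_k = a_k, q_k = b_k, and for all j > k: p_j = max{a_j, b_j} and q_j = min{a_j, b_j}. -/

import Mathlib

open Finset

/-- `a >_σ b`: the first index where `a` and `b` differ has `a k < b k`. -/
def sigmaGT {n : ℕ} (a b : Fin n → ℕ+) : Prop :=
  ∃ k : Fin n, (∀ i : Fin n, i < k → a i = b i) ∧ a k < b k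

/-- `a ≥_σ b`. -/
def sigmaGE {n : ℕ} (a b : Fin n → ℕ+) : Prop :=
  a = b ∨ sigmaGT a b

/-- A `p × n` tableau (rows in `ℤ₊ⁿ`) is semi-standard if its rows weakly decrease under `σ`. -/
def SemiStandard {p n : ℕ} (A : Fin p → Fin n → ℕ+) : Prop :=
  ∀ i j : Fin p, i ≤ j → sigmaGE (A i) (A j)

/-- `suppEq A B`: every column of `A` equals the corresponding column of `B` as a multiset. -/
def suppEq {p n : ℕ} (A B : Fin p → Fin n → ℕ+) : Prop :=
  ∀ j : Fin n, Multiset.map (fun i => A i j) Finset.univ.val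
    = Multiset.map (fun i => B i j) Finset.univ.val

/-- Row-wise lexicographic comparison of tableaux under `σ`: `A >_σ B`. -/
def tabGT {p n : ℕ} (A B : Fin p → Fin n → ℕ+) : Prop :=
  ∃ k : Fin p, (∀ i : Fin p, i < k → A i = B i) ∧ sigmaGT (A k) (B k)

/-- A semi-standard tableau is standard if it is `σ`-minimal among all semi-standard
tableaux with the same column supports. -/
def IsStandard {p n : ℕ} (A : Fin p → Fin n → ℕ+) : Prop :=
  SemiStandard A ∧ ∀ B : Fin p → Fin n → ℕ+,
    SemiStandard B → suppEq B A → B ≠ A → tabGT B A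

/-- An `n`-dimensional Ferrers diagram: a nonempty finite down-closed subset of `ℤ₊ⁿ`. -/
def IsFerrers {n : ℕ} (D : Set (Fin n → ℕ+)) : Prop :=
  D.Nonempty ∧ D.Finite ∧ ∀ b ∈ D, ∀ a : Fin n → ℕ+, (∀ i, a i ≤ b i) → a ∈ D

/-- `D` is standardizable. -/
def Standardizable {n : ℕ} (D : Set (Fin n → ℕ+)) : Prop :=
  ∀ a ∈ D, ∀ b ∈ D, a ≠ b → ∀ k : Fin n,
    (∀ i : Fin n, i < k → a i = b i) → a k < b k →
    (fun i => if i ≤ k then a i else max (a i) (b i)) ∈ D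

/-- degree of the variable `x_{i,j}` in the monomial `∏_ℓ x_{a ℓ}`. -/
def degOf {w n : ℕ} (a : Fin w → Fin n → ℕ+) (i : Fin n) (j : ℕ) : ℕ :=
  (Finset.univ.filter fun ℓ => ((a ℓ i : ℕ) = j)).card

/-!
Column supports of a two-row tableau are pairs, so `[a; b]` and `[p; q]` agree column by column
up to swapping the two entries. Before `k` the two rows of either tableau coincide, and
semi-standardness of both forces `p k < q k` and hence `p k = a k`, `q k = b k`. After `k`,
if some column had `p j < q j`, swapping that column of `[p; q]` would give a semi-standard
tableau with the same supports whose first row is `σ`-smaller than `p`, contradicting the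
minimality of the standard tableau `[p; q]`.
-/

open Function

theorem Multiset.pair_eq_pair_iff {α : Type*} {x y z w : α} :
    ({x, y} : Multiset α) = {z, w} ↔ x = z ∧ y = w ∨ x = w ∧ y = z := by
  simp only [Multiset.insert_eq_cons, Multiset.cons_eq_cons, Multiset.singleton_inj,
    Multiset.singleton_eq_cons_iff]
  grind [Multiset.pair_comm]

variable {n : ℕ}

lemma sigmaGE.lt_of_first_ne {a b : Fin n → ℕ+} (h : sigmaGE a b) {k : Fin n}
    (hk : a k ≠ b k) (hmin : ∀ i < k, a i = b i) : a k < b k := by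
  obtain rfl | ⟨m, hpre, hlt⟩ := h
  · exact absurd rfl hk
  obtain hmk | rfl | hkm := lt_trichotomy m k
  · exact absurd (hmin m hmk) hlt.ne
  · exact hlt
  · exact absurd (hpre k hkm) hk

lemma not_sigmaGE_update_of_lt {p : Fin n → ℕ+} {j : Fin n} {x : ℕ+} (h : p j < x) :
    ¬ sigmaGE (update p j x) p := by
  rintro (heq | ⟨m, -, hlt⟩)
  · exact h.ne' (by simpa using congrFun heq j)
  · by_cases hmj : m = j
    · subst hmj
      rw [update_self] at hlt
      exact (h.trans hlt).false
    · rw [update_of_ne hmj] at hlt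
      exact hlt.false

lemma tabGT.sigmaGE_zero {m : ℕ} {A B : Fin (m + 1) → Fin n → ℕ+} (h : tabGT A B) :
    sigmaGE (A 0) (B 0) := by
  obtain ⟨r, hpre, hgt⟩ := h
  obtain rfl | hr := eq_or_ne r 0
  · exact Or.inr hgt
  · exact Or.inl (hpre 0 (Fin.pos_of_ne_zero hr))

lemma semiStandard_pair_iff {a b : Fin n → ℕ+} : SemiStandard ![a, b] ↔ sigmaGE a b := by
  refine ⟨fun h => h 0 1 (by decide), fun h i j hij => ?_⟩
  fin_cases i <;> fin_cases j
  · exact Or.inl rfl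
  · exact h
  · exact absurd hij (by decide)
  · exact Or.inl rfl

lemma suppEq_pair_iff {a b p q : Fin n → ℕ+} :
    suppEq ![a, b] ![p, q] ↔ ∀ j, a j = p j ∧ b j = q j ∨ a j = q j ∧ b j = p j :=
  forall_congr' fun _ => Multiset.pair_eq_pair_iff

lemma suppEq_swap_column (p q : Fin n → ℕ+) (j : Fin n) :
    suppEq ![update p j (q j), update q j (p j)] ![p, q] := by
  refine suppEq_pair_iff.2 fun m => ?_
  by_cases hmj : m = j
  · subst hmj
    simp
  · simp [hmj]

lemma IsStandard.snd_le_fst_of_lt {p q : Fin n → ℕ+} (hstd : IsStandard ![p, q]) {k j : Fin n}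
    (hpre : ∀ i < k, p i = q i) (hk : p k < q k) (hkj : k < j) : q j ≤ p j := by
  by_contra! hlt
  have hss : SemiStandard ![update p j (q j), update q j (p j)] := by
    refine semiStandard_pair_iff.2 (Or.inr ⟨k, fun i hi => ?_, ?_⟩)
    · simpa [(hi.trans hkj).ne] using hpre i hi
    · simpa [hkj.ne] using hk
  have hne : ![update p j (q j), update q j (p j)] ≠ ![p, q] := fun h =>
    hlt.ne' (by simpa using congrFun (congrFun h 0) j)
  exact not_sigmaGE_update_of_lt hlt
    (hstd.2 _ hss (suppEq_swap_column p q j) hne).sigmaGE_zero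

theorem stmt16_general {n : ℕ} (a b p q : Fin n → ℕ+)
    (hstd : IsStandard ![p, q]) (hss : SemiStandard ![a, b])
    (hsupp : suppEq ![a, b] ![p, q])
    (k : Fin n) (hk : a k ≠ b k) (hmin : ∀ i : Fin n, i < k → a i = b i) :
    a k < b k ∧ (∀ i : Fin n, i < k → p i = a i ∧ q i = b i) ∧
    p k = a k ∧ q k = b k ∧
    ∀ j : Fin n, k < j → p j = max (a j) (b j) ∧ q j = min (a j) (b j) := by
  have hcol := suppEq_pair_iff.1 hsupp
  have hab : a k < b k := (semiStandard_pair_iff.1 hss).lt_of_first_ne hk hmin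
  have hpre : ∀ i < k, p i = a i ∧ q i = b i := fun i hi => by
    grind [hcol i, hmin i hi]
  have hpq_pre : ∀ i < k, p i = q i := fun i hi => by
    grind [hpre i hi, hmin i hi]
  have hpq : p k < q k :=
    (semiStandard_pair_iff.1 hstd.1).lt_of_first_ne (by grind [hcol k]) hpq_pre
  have hpk : p k = a k ∧ q k = b k := by
    grind [hcol k]
  refine ⟨hab, hpre, hpk.1, hpk.2, fun j hkj => ?_⟩
  have hqp : q j ≤ p j := hstd.snd_le_fst_of_lt hpq_pre hpq hkj
  grind [hcol j]

theorem stmt16 {n : ℕ} (a b p q : Fin n → ℕ+)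
    (hstd : IsStandard ![p, q]) (hss : SemiStandard ![a, b])
    (hsupp : suppEq ![a, b] ![p, q]) (hne : ![a, b] ≠ ![p, q])
    (k : Fin n) (hk : a k ≠ b k) (hmin : ∀ i : Fin n, i < k → a i = b i) :
    a k < b k ∧ (∀ i : Fin n, i < k → p i = a i ∧ q i = b i) ∧
    p k = a k ∧ q k = b k ∧
    ∀ j : Fin n, k < j → p j = max (a j) (b j) ∧ q j = min (a j) (b j) :=
  stmt16_general a b p q hstd hss hsupp k hk hmin
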